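/- Let m ≥ 1 be an odd integer and suppose q = 2^m and a = 2^{(m+1)/2} (the case a = √(2q), Frobenius angle θ = π/4). Then for every positive integer X, M(X)/2^{mX/2} equals: 1 if X ≡ 0 (mod 8); 2^{−m/2} if X ≡ 1 (mod 8); −1 + 2^{−(m−1)/2} if X ≡ 2 (mod 8); −√2 + 2^{−m/2} if X ≡ 3 (mod 8); −1 if X ≡ 4 (mod 8); −2^{−m/2} if X ≡ 5 (mod 8); 1 − 2^{−(m−1)/2} if X ≡ 6 (mod 8); √2 − 2^{−m/2} if X ≡ 7 (mod 8). -/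

import Mathlib

open Real Filter

/-- The coefficient sequence `c_N` with `c_0 = 1`, `c_1 = a - q - 1`,
`c_2 = a*c_1 - q*c_0 + q`, and `c_N = a*c_{N-1} - q*c_{N-2}` for `N ≥ 3`;
these are the Taylor coefficients at `u = 0` of `(1-u)(1-qu)/(1-au+qu²)`,
the reciprocal of the zeta function of an elliptic curve over `F_q` with
Frobenius trace `a`. -/
def mertC (q a : ℤ) : ℕ → ℤ
  | 0 => 1
  | 1 => a - q - 1
  | 2 => a * (a - q - 1) - q * 1 + q
  | (N + 3) => a * mertC q a (N + 2) - q * mertC q a (N + 1)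

/-- `M(X) = ∑_{N=0}^{X-1} c_N`, the Mertens summatory function of the
Möbius function of an elliptic curve over `F_q` with Frobenius trace `a`. -/
def mertM (q a : ℤ) (X : ℕ) : ℤ := ∑ N ∈ Finset.range X, mertC q a N

/-!
For `X ≥ 1` the partial sums satisfy the same recurrence `M(X+2) = a M(X+1) - q M(X)` as the
coefficients. With `s = √q` and `a = √2 s` the normalised values `M(X) / s^X` then obey
`v(X+2) = √2 v(X+1) - v(X)`, whose characteristic roots `e^{±iπ/4}` are primitive eighth roots
of unity, so `v(X+4) = -v(X)`. The eight values follow from `M(1) = 1` and `M(2) = a - q`.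
-/

theorem add_four_eq_neg_sq_mul_of_sq_eq_two_mul {R : Type*} [CommRing R] {u : ℕ → R} {a q : R}
    (hrec : ∀ n, u (n + 2) = a * u (n + 1) - q * u n) (ha : a ^ 2 = 2 * q) (n : ℕ) :
    u (n + 4) = -q ^ 2 * u n := by
  linear_combination hrec (n + 2) + a * hrec (n + 1) + q * hrec n + u (n + 2) * ha

theorem mertM_add_three (q a : ℤ) (n : ℕ) :
    mertM q a (n + 3) = a * mertM q a (n + 2) - q * mertM q a (n + 1) := by
  induction n with
  | zero => simp only [mertM, Finset.sum_range_succ, Finset.sum_range_zero, mertC]; ring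
  | succ n ih =>
    simp only [mertM, Finset.sum_range_succ (n := n + 3), Finset.sum_range_succ (n := n + 2),
      Finset.sum_range_succ (n := n + 1)] at ih ⊢
    rw [show mertC q a (n + 3) = a * mertC q a (n + 2) - q * mertC q a (n + 1) from rfl]
    linear_combination ih

/-- Indexed from `X = 1`: the recurrence of `mertM` only holds from there on. -/
noncomputable def mertNormalized (q a : ℤ) (s : ℝ) (n : ℕ) : ℝ :=
  mertM q a (n + 1) / s ^ (n + 1)

section

variable {q a : ℤ} {s : ℝ}

theorem mertNormalized_zero : mertNormalized q a s 0 = s⁻¹ := by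
  simp [mertNormalized, mertM, mertC]

variable (hs : s ≠ 0) (hq : (q : ℝ) = s ^ 2) (ha : (a : ℝ) = √2 * s)
include hs hq ha

theorem mertNormalized_one : mertNormalized q a s 1 = √2 * s⁻¹ - 1 := by
  simp only [mertNormalized, mertM, Finset.sum_range_succ, Finset.sum_range_zero, mertC]
  push_cast
  rw [hq, ha]
  field_simp
  ring

theorem mertNormalized_add_two (n : ℕ) :
    mertNormalized q a s (n + 2) =
      √2 * mertNormalized q a s (n + 1) - mertNormalized q a s n := by
  simp only [mertNormalized, mertM_add_three, Int.cast_sub, Int.cast_mul, hq, ha]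
  field_simp
  ring

theorem mertNormalized_two : mertNormalized q a s 2 = s⁻¹ - √2 := by
  rw [mertNormalized_add_two hs hq ha, mertNormalized_one hs hq ha, mertNormalized_zero]
  linear_combination s⁻¹ * Real.mul_self_sqrt zero_le_two

theorem mertNormalized_three : mertNormalized q a s 3 = -1 := by
  rw [mertNormalized_add_two hs hq ha, mertNormalized_two hs hq ha, mertNormalized_one hs hq ha]
  linear_combination -Real.mul_self_sqrt zero_le_two

theorem mertNormalized_antiperiodic : Function.Antiperiodic (mertNormalized q a s) 4 := by
  intro n
  simpa using add_four_eq_neg_sq_mul_of_sq_eq_two_mul (a := √2) (q := (1 : ℝ))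
    (by simpa using mertNormalized_add_two hs hq ha) (by simp) n

end

theorem mertM_div_two_rpow (q a : ℤ) (m n : ℕ) :
    (mertM q a (n + 1) : ℝ) / (2 : ℝ) ^ ((m : ℝ) * ((n + 1 : ℕ) : ℝ) / 2) =
      mertNormalized q a ((2 : ℝ) ^ ((m : ℝ) / 2)) n := by
  rw [mertNormalized, ← Real.rpow_natCast, ← Real.rpow_mul zero_le_two]
  ring_nf

theorem two_rpow_div_two_sq (m : ℕ) : ((2 : ℝ) ^ ((m : ℝ) / 2)) ^ 2 = 2 ^ m := by
  rw [← Real.rpow_natCast _ 2, ← Real.rpow_mul zero_le_two]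
  norm_num

theorem two_pow_succ_div_two_of_odd {m : ℕ} (hm : Odd m) :
    (2 : ℝ) ^ ((m + 1) / 2) = √2 * 2 ^ ((m : ℝ) / 2) := by
  obtain ⟨k, rfl⟩ := hm
  rw [Real.sqrt_eq_rpow, ← Real.rpow_add two_pos, show (2 * k + 1 + 1) / 2 = k + 1 by omega,
    ← Real.rpow_natCast]
  push_cast
  ring_nf

theorem mertens_case_sqrt_2q_general (m : ℕ) (hodd : Odd m) (q a : ℤ)
    (hq : q = 2 ^ m) (ha : a = 2 ^ ((m + 1) / 2)) :
    ∀ X : ℕ, 1 ≤ X →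
      (X % 8 = 0 → (mertM q a X : ℝ) / (2 : ℝ) ^ ((m : ℝ) * (X : ℝ) / 2) = 1) ∧
      (X % 8 = 1 → (mertM q a X : ℝ) / (2 : ℝ) ^ ((m : ℝ) * (X : ℝ) / 2) =
        (2 : ℝ) ^ (-(m : ℝ) / 2)) ∧
      (X % 8 = 2 → (mertM q a X : ℝ) / (2 : ℝ) ^ ((m : ℝ) * (X : ℝ) / 2) =
        -1 + (2 : ℝ) ^ (-((m : ℝ) - 1) / 2)) ∧
      (X % 8 = 3 → (mertM q a X : ℝ) / (2 : ℝ) ^ ((m : ℝ) * (X : ℝ) / 2) =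
        -Real.sqrt 2 + (2 : ℝ) ^ (-(m : ℝ) / 2)) ∧
      (X % 8 = 4 → (mertM q a X : ℝ) / (2 : ℝ) ^ ((m : ℝ) * (X : ℝ) / 2) = -1) ∧
      (X % 8 = 5 → (mertM q a X : ℝ) / (2 : ℝ) ^ ((m : ℝ) * (X : ℝ) / 2) =
        -(2 : ℝ) ^ (-(m : ℝ) / 2)) ∧
      (X % 8 = 6 → (mertM q a X : ℝ) / (2 : ℝ) ^ ((m : ℝ) * (X : ℝ) / 2) =
        1 - (2 : ℝ) ^ (-((m : ℝ) - 1) / 2)) ∧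
      (X % 8 = 7 → (mertM q a X : ℝ) / (2 : ℝ) ^ ((m : ℝ) * (X : ℝ) / 2) =
        Real.sqrt 2 - (2 : ℝ) ^ (-(m : ℝ) / 2)) := by
  set s : ℝ := (2 : ℝ) ^ ((m : ℝ) / 2)
  have hs : s ≠ 0 := by positivity
  have hqs : (q : ℝ) = s ^ 2 := by rw [two_rpow_div_two_sq]; exact_mod_cast hq
  have has : (a : ℝ) = √2 * s := by rw [← two_pow_succ_div_two_of_odd hodd]; exact_mod_cast ha
  have hinv : (2 : ℝ) ^ (-(m : ℝ) / 2) = s⁻¹ := by rw [neg_div, Real.rpow_neg zero_le_two]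
  have hinv' : (2 : ℝ) ^ (-((m : ℝ) - 1) / 2) = √2 * s⁻¹ := by
    rw [← hinv, Real.sqrt_eq_rpow, ← Real.rpow_add two_pos]; ring_nf
  intro X hX
  obtain ⟨n, rfl⟩ : ∃ n, X = n + 1 := ⟨X - 1, by omega⟩
  have hanti := mertNormalized_antiperiodic hs hqs has
  have hv : ∀ r, n % 8 = r → mertNormalized q a s n = mertNormalized q a s r := fun r hr =>
    hr ▸ (hanti.periodic_two_mul.map_mod_nat n).symm
  simp only [mertM_div_two_rpow, hinv, hinv']
  refine ⟨fun h => ?_, fun h => ?_, fun h => ?_, fun h => ?_,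
    fun h => ?_, fun h => ?_, fun h => ?_, fun h => ?_⟩
  · rw [hv (3 + 4) (by omega), hanti, mertNormalized_three hs hqs has, neg_neg]
  · rw [hv 0 (by omega), mertNormalized_zero]
  · rw [hv 1 (by omega), mertNormalized_one hs hqs has]; ring
  · rw [hv 2 (by omega), mertNormalized_two hs hqs has]; ring
  · rw [hv 3 (by omega), mertNormalized_three hs hqs has]
  · rw [hv (0 + 4) (by omega), hanti, mertNormalized_zero]
  · rw [hv (1 + 4) (by omega), hanti, mertNormalized_one hs hqs has]; ring
  · rw [hv (2 + 4) (by omega), hanti, mertNormalized_two hs hqs has]; ring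

theorem mertens_case_sqrt_2q (m : ℕ) (hm : 1 ≤ m) (hodd : Odd m) (q a : ℤ)
    (hq : q = 2 ^ m) (ha : a = 2 ^ ((m + 1) / 2)) :
    ∀ X : ℕ, 1 ≤ X →
      (X % 8 = 0 → (mertM q a X : ℝ) / (2 : ℝ) ^ ((m : ℝ) * (X : ℝ) / 2) = 1) ∧
      (X % 8 = 1 → (mertM q a X : ℝ) / (2 : ℝ) ^ ((m : ℝ) * (X : ℝ) / 2) =
        (2 : ℝ) ^ (-(m : ℝ) / 2)) ∧
      (X % 8 = 2 → (mertM q a X : ℝ) / (2 : ℝ) ^ ((m : ℝ) * (X : ℝ) / 2) =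
        -1 + (2 : ℝ) ^ (-((m : ℝ) - 1) / 2)) ∧
      (X % 8 = 3 → (mertM q a X : ℝ) / (2 : ℝ) ^ ((m : ℝ) * (X : ℝ) / 2) =
        -Real.sqrt 2 + (2 : ℝ) ^ (-(m : ℝ) / 2)) ∧
      (X % 8 = 4 → (mertM q a X : ℝ) / (2 : ℝ) ^ ((m : ℝ) * (X : ℝ) / 2) = -1) ∧
      (X % 8 = 5 → (mertM q a X : ℝ) / (2 : ℝ) ^ ((m : ℝ) * (X : ℝ) / 2) =
        -(2 : ℝ) ^ (-(m : ℝ) / 2)) ∧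
      (X % 8 = 6 → (mertM q a X : ℝ) / (2 : ℝ) ^ ((m : ℝ) * (X : ℝ) / 2) =
        1 - (2 : ℝ) ^ (-((m : ℝ) - 1) / 2)) ∧
      (X % 8 = 7 → (mertM q a X : ℝ) / (2 : ℝ) ^ ((m : ℝ) * (X : ℝ) / 2) =
        Real.sqrt 2 - (2 : ℝ) ^ (-(m : ℝ) / 2)) :=
  mertens_case_sqrt_2q_general m hodd q a hq ha
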